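/- arXiv:1408.5296 — 3 statements merged into one kernel-verified Lean document; each statement's English description precedes it below -/
import Mathlib

section
/- For all natural numbers a, b, c, d with a + b + c + d = n, one has F(n) ≥ F(a) + F(b) + F(c) + F(d) + a·b·c + a·b·d + a·c·d + b·c·d. -/
/-- A triangle (3-element vertex set) is rainbow: its three edges get pairwise distinct colors. -/
def IsRainbow {V : Type*} [DecidableEq V] (G : Sym2 V → Fin 3) (T : Finset V) : Prop :=
  ∃ u v w : V, T = {u, v, w} ∧ u ≠ v ∧ u ≠ w ∧ v ≠ w ∧
    G s(u, v) ≠ G s(u, w) ∧ G s(u, v) ≠ G s(v, w) ∧ G s(u, w) ≠ G s(v, w)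

/-- The number of rainbow triangles of a 3-edge-coloring. -/
noncomputable def rbCount {V : Type*} [DecidableEq V] (G : Sym2 V → Fin 3) : ℕ :=
  Nat.card {T : Finset V // IsRainbow G T}

/-- `maxRb n` is `F(n)`: the maximum number of rainbow triangles over all
3-edge-colorings of the complete graph on `n` vertices. -/
noncomputable def maxRb (n : ℕ) : ℕ :=
  Finset.univ.sup fun G : Sym2 (Fin n) → Fin 3 => rbCount G

namespace Aux

lemma rainbow_map {V V' : Type*} [DecidableEq V] [DecidableEq V']
    (G : Sym2 V → Fin 3) (G' : Sym2 V' → Fin 3) (φ : V ↪ V')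
    (hcomp : ∀ x y : V, G' s(φ x, φ y) = G s(x, y)) {T : Finset V}
    (h : IsRainbow G T) : IsRainbow G' (T.map φ) := by
  obtain ⟨u, v, w, rfl, huv, huw, hvw, c1, c2, c3⟩ := h
  refine ⟨φ u, φ v, φ w, ?_, φ.injective.ne huv, φ.injective.ne huw, φ.injective.ne hvw, ?_, ?_, ?_⟩
  · simp [Finset.map_insert, Finset.map_singleton]
  all_goals rw [hcomp, hcomp]; assumption

lemma rb_le {V V' : Type*} [DecidableEq V] [DecidableEq V'] [Finite V']
    (G : Sym2 V → Fin 3) (G' : Sym2 V' → Fin 3) (φ : V ↪ V')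
    (hcomp : ∀ x y : V, G' s(φ x, φ y) = G s(x, y)) : rbCount G ≤ rbCount G' := by
  haveI := Fintype.ofFinite V'
  classical
  apply Nat.card_le_card_of_injective
    (fun T : {T : Finset V // IsRainbow G T} =>
      (⟨T.1.map φ, rainbow_map G G' φ hcomp T.2⟩ : {T : Finset V' // IsRainbow G' T}))
  intro T1 T2 h
  exact Subtype.ext (Finset.map_injective φ (congrArg Subtype.val h))

lemma rainbow_nonempty {V : Type*} [DecidableEq V] {G : Sym2 V → Fin 3} {T : Finset V}
    (h : IsRainbow G T) : T.Nonempty := by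
  obtain ⟨u, v, w, rfl, -⟩ := h; exact ⟨u, by simp⟩

lemma parts_map {V V' : Type*} [DecidableEq V] [DecidableEq V']
    (φ : V ↪ V') (g : V' → Fin 4) (p : Fin 4) (hφ : ∀ x, g (φ x) = p)
    {T : Finset V} (hT : T.Nonempty) : (T.map φ).image g = {p} := by
  rw [Finset.map_eq_image, Finset.image_image]
  rw [show (g ∘ φ) = fun _ => p from funext hφ]
  exact Finset.image_const hT p

lemma triple_eq {α β : Type*} [DecidableEq α] {g : α → β} {u v w u' v' w' : α}
    (h : ({u, v, w} : Finset α) = {u', v', w'})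
    (guu : g u = g u') (gvv : g v = g v') (gww : g w = g w')
    (huv : g u ≠ g v) (huw : g u ≠ g w) (hvw : g v ≠ g w) :
    u = u' ∧ v = v' ∧ w = w' := by
  have hu : u = u' ∨ u = v' ∨ u = w' := by
    have : u ∈ ({u', v', w'} : Finset α) := h ▸ by simp
    simpa using this
  have hv : v = u' ∨ v = v' ∨ v = w' := by
    have : v ∈ ({u', v', w'} : Finset α) := h ▸ by simp [Finset.mem_insert]
    simpa using this
  have hw : w = u' ∨ w = v' ∨ w = w' := by
    have : w ∈ ({u', v', w'} : Finset α) := h ▸ by simp [Finset.mem_insert]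
    simpa using this
  rcases hu with rfl | hu | hu
  · refine ⟨rfl, ?_, ?_⟩
    · rcases hv with hv | rfl | hv
      · exact absurd (congrArg g hv).symm huv
      · rfl
      · exact absurd ((congrArg g hv).trans gww.symm) hvw
    · rcases hw with hw | hw | rfl
      · exact absurd (congrArg g hw).symm huw
      · exact absurd ((congrArg g hw).trans gvv.symm).symm hvw
      · rfl
  · exact absurd ((congrArg g hu).trans gvv.symm) huv
  · exact absurd ((congrArg g hu).trans gww.symm) huw

variable {a b c d : ℕ}

abbrev W (a b c d : ℕ) := Fin a ⊕ Fin b ⊕ Fin c ⊕ Fin d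

def eA : Fin a → W a b c d := Sum.inl
def eB : Fin b → W a b c d := fun x => Sum.inr (Sum.inl x)
def eC : Fin c → W a b c d := fun x => Sum.inr (Sum.inr (Sum.inl x))
def eD : Fin d → W a b c d := fun x => Sum.inr (Sum.inr (Sum.inr x))

def embA : Fin a ↪ W a b c d := ⟨eA, fun x y h => by simpa [eA] using h⟩
def embB : Fin b ↪ W a b c d := ⟨eB, fun x y h => by simpa [eB] using h⟩
def embC : Fin c ↪ W a b c d := ⟨eC, fun x y h => by simpa [eC] using h⟩
def embD : Fin d ↪ W a b c d := ⟨eD, fun x y h => by simpa [eD] using h⟩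

def pt : W a b c d → Fin 4
| .inl _ => 0
| .inr (.inl _) => 1
| .inr (.inr (.inl _)) => 2
| .inr (.inr (.inr _)) => 3

variable (Ga : Sym2 (Fin a) → Fin 3) (Gb : Sym2 (Fin b) → Fin 3)
  (Gc : Sym2 (Fin c) → Fin 3) (Gd : Sym2 (Fin d) → Fin 3)

def f : W a b c d → W a b c d → Fin 3
| .inl x, .inl y => Ga s(x, y)
| .inl _, .inr (.inl _) => 0
| .inl _, .inr (.inr (.inl _)) => 1
| .inl _, .inr (.inr (.inr _)) => 2
| .inr (.inl _), .inl _ => 0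
| .inr (.inl x), .inr (.inl y) => Gb s(x, y)
| .inr (.inl _), .inr (.inr (.inl _)) => 2
| .inr (.inl _), .inr (.inr (.inr _)) => 1
| .inr (.inr (.inl _)), .inl _ => 1
| .inr (.inr (.inl _)), .inr (.inl _) => 2
| .inr (.inr (.inl x)), .inr (.inr (.inl y)) => Gc s(x, y)
| .inr (.inr (.inl _)), .inr (.inr (.inr _)) => 0
| .inr (.inr (.inr _)), .inl _ => 2
| .inr (.inr (.inr _)), .inr (.inl _) => 1
| .inr (.inr (.inr _)), .inr (.inr (.inl _)) => 0
| .inr (.inr (.inr x)), .inr (.inr (.inr y)) => Gd s(x, y)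

lemma f_comm : ∀ u v, f Ga Gb Gc Gd u v = f Ga Gb Gc Gd v u := by
  rintro (x | x | x | x) (y | y | y | y) <;> simp [f] <;> rw [Sym2.eq_swap]

def H : Sym2 (W a b c d) → Fin 3 := Sym2.lift ⟨f Ga Gb Gc Gd, f_comm Ga Gb Gc Gd⟩

@[simp] lemma H_mk (u v : W a b c d) : H Ga Gb Gc Gd s(u, v) = f Ga Gb Gc Gd u v := rfl

lemma rainbowABC (x : Fin a) (y : Fin b) (z : Fin c) :
    IsRainbow (H Ga Gb Gc Gd) ({eA x, eB y, eC z} : Finset (W a b c d)) := by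
  refine ⟨eA x, eB y, eC z, rfl, ?_, ?_, ?_, ?_, ?_, ?_⟩ <;> simp [eA, eB, eC, f]

lemma rainbowABD (x : Fin a) (y : Fin b) (z : Fin d) :
    IsRainbow (H Ga Gb Gc Gd) ({eA x, eB y, eD z} : Finset (W a b c d)) := by
  refine ⟨eA x, eB y, eD z, rfl, ?_, ?_, ?_, ?_, ?_, ?_⟩ <;> simp [eA, eB, eD, f]

lemma rainbowACD (x : Fin a) (y : Fin c) (z : Fin d) :
    IsRainbow (H Ga Gb Gc Gd) ({eA x, eC y, eD z} : Finset (W a b c d)) := by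
  refine ⟨eA x, eC y, eD z, rfl, ?_, ?_, ?_, ?_, ?_, ?_⟩ <;> simp [eA, eC, eD, f]

lemma rainbowBCD (x : Fin b) (y : Fin c) (z : Fin d) :
    IsRainbow (H Ga Gb Gc Gd) ({eB x, eC y, eD z} : Finset (W a b c d)) := by
  refine ⟨eB x, eC y, eD z, rfl, ?_, ?_, ?_, ?_, ?_, ?_⟩ <;> simp [eB, eC, eD, f]

def S (a b c d : ℕ) (Ga : Sym2 (Fin a) → Fin 3) (Gb : Sym2 (Fin b) → Fin 3)
    (Gc : Sym2 (Fin c) → Fin 3) (Gd : Sym2 (Fin d) → Fin 3) : Type :=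
  {T : Finset (Fin a) // IsRainbow Ga T} ⊕ {T : Finset (Fin b) // IsRainbow Gb T} ⊕
  {T : Finset (Fin c) // IsRainbow Gc T} ⊕ {T : Finset (Fin d) // IsRainbow Gd T} ⊕
  ((Fin a × Fin b × Fin c) ⊕ (Fin a × Fin b × Fin d) ⊕ (Fin a × Fin c × Fin d) ⊕ (Fin b × Fin c × Fin d))

def Phi : S a b c d Ga Gb Gc Gd → {T : Finset (W a b c d) // IsRainbow (H Ga Gb Gc Gd) T}
| .inl T => ⟨T.1.map embA, rainbow_map Ga _ embA (fun _ _ => rfl) T.2⟩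
| .inr (.inl T) => ⟨T.1.map embB, rainbow_map Gb _ embB (fun _ _ => rfl) T.2⟩
| .inr (.inr (.inl T)) => ⟨T.1.map embC, rainbow_map Gc _ embC (fun _ _ => rfl) T.2⟩
| .inr (.inr (.inr (.inl T))) => ⟨T.1.map embD, rainbow_map Gd _ embD (fun _ _ => rfl) T.2⟩
| .inr (.inr (.inr (.inr (.inl ⟨x, y, z⟩)))) => ⟨_, rainbowABC Ga Gb Gc Gd x y z⟩
| .inr (.inr (.inr (.inr (.inr (.inl ⟨x, y, z⟩))))) => ⟨_, rainbowABD Ga Gb Gc Gd x y z⟩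
| .inr (.inr (.inr (.inr (.inr (.inr (.inl ⟨x, y, z⟩)))))) => ⟨_, rainbowACD Ga Gb Gc Gd x y z⟩
| .inr (.inr (.inr (.inr (.inr (.inr (.inr ⟨x, y, z⟩)))))) => ⟨_, rainbowBCD Ga Gb Gc Gd x y z⟩

def key : S a b c d Ga Gb Gc Gd → Finset (Fin 4)
| .inl _ => {0}
| .inr (.inl _) => {1}
| .inr (.inr (.inl _)) => {2}
| .inr (.inr (.inr (.inl _))) => {3}
| .inr (.inr (.inr (.inr (.inl _)))) => {0, 1, 2}
| .inr (.inr (.inr (.inr (.inr (.inl _))))) => {0, 1, 3}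
| .inr (.inr (.inr (.inr (.inr (.inr (.inl _)))))) => {0, 2, 3}
| .inr (.inr (.inr (.inr (.inr (.inr (.inr _)))))) => {1, 2, 3}

lemma hkey : ∀ s : S a b c d Ga Gb Gc Gd, ((Phi Ga Gb Gc Gd s).1).image pt = key Ga Gb Gc Gd s := by
  rintro (⟨T, h⟩ | ⟨T, h⟩ | ⟨T, h⟩ | ⟨T, h⟩ | ⟨x, y, z⟩ | ⟨x, y, z⟩ | ⟨x, y, z⟩ | ⟨x, y, z⟩) <;>
    simp only [Phi, key]
  · exact parts_map embA pt 0 (fun _ => rfl) (rainbow_nonempty h)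
  · exact parts_map embB pt 1 (fun _ => rfl) (rainbow_nonempty h)
  · exact parts_map embC pt 2 (fun _ => rfl) (rainbow_nonempty h)
  · exact parts_map embD pt 3 (fun _ => rfl) (rainbow_nonempty h)
  all_goals simp [Finset.image_insert, pt, eA, eB, eC, eD]

lemma Phi_inj : Function.Injective (Phi Ga Gb Gc Gd) := by
  intro s1 s2 h
  have hp : key Ga Gb Gc Gd s1 = key Ga Gb Gc Gd s2 := by
    rw [← hkey Ga Gb Gc Gd s1, ← hkey Ga Gb Gc Gd s2, h]
  rcases s1 with ⟨T1, h1⟩ | ⟨T1, h1⟩ | ⟨T1, h1⟩ | ⟨T1, h1⟩ | ⟨x1, y1, z1⟩ | ⟨x1, y1, z1⟩ | ⟨x1, y1, z1⟩ | ⟨x1, y1, z1⟩ <;>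
  rcases s2 with ⟨T2, h2⟩ | ⟨T2, h2⟩ | ⟨T2, h2⟩ | ⟨T2, h2⟩ | ⟨x2, y2, z2⟩ | ⟨x2, y2, z2⟩ | ⟨x2, y2, z2⟩ | ⟨x2, y2, z2⟩ <;>
  first
    | (simp only [key] at hp; exact absurd hp (by decide))
    | (simp only [Phi, Subtype.mk.injEq] at h
       obtain rfl := Finset.map_injective _ h
       rfl)
    | (simp only [Phi, Subtype.mk.injEq] at h
       obtain ⟨e1, e2, e3⟩ := triple_eq (g := pt) h rfl rfl rfl
         (by simp [pt, eA, eB, eC, eD]) (by simp [pt, eA, eB, eC, eD]) (by simp [pt, eA, eB, eC, eD])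
       simp only [eA, eB, eC, eD, Sum.inl.injEq, Sum.inr.injEq] at e1 e2 e3
       subst e1; subst e2; subst e3; rfl)

lemma main_count :
    rbCount Ga + rbCount Gb + rbCount Gc + rbCount Gd
      + a * b * c + a * b * d + a * c * d + b * c * d ≤ rbCount (H Ga Gb Gc Gd) := by
  classical
  have hle := Nat.card_le_card_of_injective _ (Phi_inj Ga Gb Gc Gd)
  have hS : Nat.card (S a b c d Ga Gb Gc Gd)
      = rbCount Ga + rbCount Gb + rbCount Gc + rbCount Gd
        + a * b * c + a * b * d + a * c * d + b * c * d := by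
    simp only [S, Nat.card_eq_fintype_card, Fintype.card_sum, Fintype.card_prod,
      Fintype.card_fin, rbCount]
    ring
  rw [hS] at hle
  exact hle

end Aux

theorem stmt6 (n a b c d : ℕ) (h : a + b + c + d = n) :
    maxRb n ≥ maxRb a + maxRb b + maxRb c + maxRb d
      + a * b * c + a * b * d + a * c * d + b * c * d := by
  classical
  subst h
  obtain ⟨Ga, -, hGa⟩ := Finset.exists_mem_eq_sup (Finset.univ : Finset (Sym2 (Fin a) → Fin 3))
    ⟨fun _ => 0, Finset.mem_univ _⟩ rbCount
  obtain ⟨Gb, -, hGb⟩ := Finset.exists_mem_eq_sup (Finset.univ : Finset (Sym2 (Fin b) → Fin 3))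
    ⟨fun _ => 0, Finset.mem_univ _⟩ rbCount
  obtain ⟨Gc, -, hGc⟩ := Finset.exists_mem_eq_sup (Finset.univ : Finset (Sym2 (Fin c) → Fin 3))
    ⟨fun _ => 0, Finset.mem_univ _⟩ rbCount
  obtain ⟨Gd, -, hGd⟩ := Finset.exists_mem_eq_sup (Finset.univ : Finset (Sym2 (Fin d) → Fin 3))
    ⟨fun _ => 0, Finset.mem_univ _⟩ rbCount
  have hcard : Fintype.card (Fin (a + b + c + d)) = Fintype.card (Aux.W a b c d) := by
    simp [Aux.W]; ring
  let e : Fin (a + b + c + d) ≃ Aux.W a b c d := Fintype.equivOfCardEq hcard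
  let G : Sym2 (Fin (a + b + c + d)) → Fin 3 := fun p => Aux.H Ga Gb Gc Gd (p.map e)
  have h1 : rbCount (Aux.H Ga Gb Gc Gd) ≤ rbCount G := by
    apply Aux.rb_le _ _ e.symm.toEmbedding
    intro x y
    simp [G, Sym2.map_pair_eq]
  have h2 : rbCount G ≤ maxRb (a + b + c + d) := Finset.le_sup (Finset.mem_univ G)
  have h3 := Aux.main_count Ga Gb Gc Gd
  have ea : maxRb a = rbCount Ga := hGa
  have eb : maxRb b = rbCount Gb := hGb
  have ec : maxRb c = rbCount Gc := hGc
  have ed : maxRb d = rbCount Gd := hGd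
  rw [ge_iff_le, ea, eb, ec, ed]
  exact h3.trans (h1.trans h2)
end

section
/- For every natural number n ≥ 3, F(n) ≥ n(n−1)(n−2)/15; that is, there exists a 3-edge-coloring of K_n with at least (2/5)·C(n,3) rainbow triangles. -/
open Finset

section Rainbow

variable {V W ι : Type*} [DecidableEq V] [DecidableEq W]

open Classical in
noncomputable def rainbowTriangles (G : Sym2 V → Fin 3) (S : Finset V) : Finset (Finset V) :=
  (S.powersetCard 3).filter (IsRainbow G)

lemma mem_rainbowTriangles {G : Sym2 V → Fin 3} {S T : Finset V} :
    T ∈ rainbowTriangles G S ↔ T ∈ S.powersetCard 3 ∧ IsRainbow G T := by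
  simp only [rainbowTriangles, mem_filter]

lemma IsRainbow.card_eq_three {G : Sym2 V → Fin 3} {T : Finset V} (h : IsRainbow G T) :
    #T = 3 := by
  obtain ⟨u, v, w, rfl, huv, huw, hvw, -⟩ := h
  exact Finset.card_eq_three.2 ⟨u, v, w, huv, huw, hvw, rfl⟩

lemma isRainbow_comp_map_iff (G : Sym2 W → Fin 3) (f : V ↪ W) (T : Finset V) :
    IsRainbow (G ∘ Sym2.map f) T ↔ IsRainbow G (T.map f) := by
  constructor
  · rintro ⟨u, v, w, rfl, huv, huw, hvw, h⟩
    exact ⟨f u, f v, f w, by simp, by simpa, by simpa, by simpa, by simpa using h⟩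
  · rintro ⟨a, b, c, hT, hab, hac, hbc, h⟩
    have hmem : ∀ x ∈ ({a, b, c} : Finset W), ∃ u ∈ T, f u = x := fun x hx => by
      rw [← hT] at hx; simpa using hx
    obtain ⟨u, hu, rfl⟩ := hmem a (by simp)
    obtain ⟨v, hv, rfl⟩ := hmem b (by simp)
    obtain ⟨w, hw, rfl⟩ := hmem c (by simp)
    refine ⟨u, v, w, map_injective f ?_, by simpa using hab, by simpa using hac,
      by simpa using hbc, by simpa using h⟩
    simpa using hT

lemma card_rainbowTriangles_map (G : Sym2 W → Fin 3) (f : V ↪ W) (S : Finset V) :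
    #(rainbowTriangles G (S.map f)) = #(rainbowTriangles (G ∘ Sym2.map f) S) := by
  classical
  unfold rainbowTriangles
  rw [powersetCard_map, filter_map, card_map]
  congr 1
  exact filter_congr fun T _ => (isRainbow_comp_map_iff G f T).symm

lemma rbCount_eq_card_rainbowTriangles [Fintype V] (G : Sym2 V → Fin 3) :
    rbCount G = #(rainbowTriangles G univ) := by
  classical
  rw [rbCount, Nat.card_eq_fintype_card, Fintype.card_subtype]
  congr 1
  ext T
  simp only [mem_filter, mem_univ, true_and, mem_rainbowTriangles, mem_powersetCard, subset_univ]
  exact ⟨fun h => ⟨h.card_eq_three, h⟩, And.right⟩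

lemma isRainbow_of_injOn {G : Sym2 V → Fin 3} {p : V → ι}
    (hG : ∀ u v w, p u ≠ p v → p u ≠ p w → p v ≠ p w →
      G s(u, v) ≠ G s(u, w) ∧ G s(u, v) ≠ G s(v, w) ∧ G s(u, w) ≠ G s(v, w))
    {T : Finset V} (hT : #T = 3) (hinj : Set.InjOn p ↑T) : IsRainbow G T := by
  obtain ⟨u, v, w, huv, huw, hvw, rfl⟩ := Finset.card_eq_three.1 hT
  have hne : ∀ a ∈ ({u, v, w} : Finset V), ∀ b ∈ ({u, v, w} : Finset V), a ≠ b → p a ≠ p b :=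
    fun a ha b hb hab h => hab (hinj ha hb h)
  exact ⟨u, v, w, rfl, huv, huw, hvw, hG u v w (hne u (by simp) v (by simp) huv)
    (hne u (by simp) w (by simp) huw) (hne v (by simp) w (by simp) hvw)⟩

def sectionImage (A : Finset ι) (f : ∀ i ∈ A, V) : Finset V :=
  A.attach.image fun i => f i.1 i.2

lemma mem_sectionImage {A : Finset ι} {f : ∀ i ∈ A, V} {v : V} :
    v ∈ sectionImage A f ↔ ∃ i hi, f i hi = v := by
  simp only [sectionImage, mem_image, mem_attach, true_and, Subtype.exists]

lemma injOn_sectionImage {p : V → ι} {A : Finset ι} {f : ∀ i ∈ A, V}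
    (hf : ∀ i hi, p (f i hi) = i) : Set.InjOn p ↑(sectionImage A f) := by
  intro v hv w hw hvw
  obtain ⟨i, hi, rfl⟩ := mem_sectionImage.1 hv
  obtain ⟨j, hj, rfl⟩ := mem_sectionImage.1 hw
  obtain rfl : i = j := by rw [← hf i hi, hvw, hf j hj]
  rfl

variable [DecidableEq ι]

lemma image_sectionImage {p : V → ι} {A : Finset ι} {f : ∀ i ∈ A, V}
    (hf : ∀ i hi, p (f i hi) = i) : (sectionImage A f).image p = A := by
  ext i
  simp only [mem_image, mem_sectionImage]
  constructor
  · rintro ⟨_, ⟨j, hj, rfl⟩, rfl⟩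
    rwa [hf]
  · exact fun hi => ⟨_, ⟨i, hi, rfl⟩, hf i hi⟩

lemma card_sectionImage {p : V → ι} {A : Finset ι} {f : ∀ i ∈ A, V}
    (hf : ∀ i hi, p (f i hi) = i) : #(sectionImage A f) = #A := by
  rw [← card_image_of_injOn (injOn_sectionImage hf), image_sectionImage hf]

open Classical in
lemma sum_prod_card_fiber_le_card_injOn (p : V → ι) (S : Finset V) (I : Finset ι) (k : ℕ) :
    ∑ A ∈ I.powersetCard k, ∏ i ∈ A, #{v ∈ S | p v = i} ≤
      #((S.powersetCard k).filter fun T : Finset V => Set.InjOn p ↑T) := by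
  simp_rw [← card_pi, ← card_sigma]
  set X := (I.powersetCard k).sigma fun A => A.pi fun i => {v ∈ S | p v = i}
  have hX : ∀ x ∈ X, ∀ i (hi : i ∈ x.1), x.2 i hi ∈ S ∧ p (x.2 i hi) = i := by
    intro x hx i hi
    simp only [X, mem_sigma, mem_pi, mem_filter] at hx
    exact hx.2 i hi
  refine card_le_card_of_injOn (fun x => sectionImage x.1 x.2) (fun x hx => ?_)
    (fun x hx y hy hxy => ?_)
  · have hf := fun i hi => (hX x hx i hi).2
    refine mem_filter.2 ⟨mem_powersetCard.2 ⟨fun v hv => ?_, ?_⟩, injOn_sectionImage hf⟩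
    · obtain ⟨i, hi, rfl⟩ := mem_sectionImage.1 hv
      exact (hX x hx i hi).1
    · rw [card_sectionImage hf, (mem_powersetCard.1 (mem_sigma.1 hx).1).2]
  · obtain ⟨A, f⟩ := x
    obtain ⟨B, g⟩ := y
    have hf : ∀ i hi, p (f i hi) = i := fun i hi => (hX _ hx i hi).2
    have hg : ∀ i hi, p (g i hi) = i := fun i hi => (hX _ hy i hi).2
    simp only at hxy
    obtain rfl : A = B := (image_sectionImage hf).symm.trans (hxy ▸ image_sectionImage hg)
    simp only [Sigma.mk.injEq, heq_eq_eq, true_and]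
    funext i hi
    obtain ⟨j, hj, hgj⟩ := mem_sectionImage.1 (hxy ▸ mem_sectionImage.2 ⟨i, hi, rfl⟩ :
      f i hi ∈ sectionImage A g)
    obtain rfl : j = i := by rw [← hg j hj, ← hf i hi, hgj]
    exact hgj.symm

open Classical in
lemma card_injOn_add_sum_le_card_rainbowTriangles (G : Sym2 V → Fin 3) (p : V → ι)
    (hG : ∀ u v w, p u ≠ p v → p u ≠ p w → p v ≠ p w →
      G s(u, v) ≠ G s(u, w) ∧ G s(u, v) ≠ G s(v, w) ∧ G s(u, w) ≠ G s(v, w))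
    (S : Finset V) (I : Finset ι) :
    #((S.powersetCard 3).filter fun T : Finset V => Set.InjOn p ↑T) +
        ∑ i ∈ I, #(rainbowTriangles G {v ∈ S | p v = i}) ≤ #(rainbowTriangles G S) := by
  set X := (S.powersetCard 3).filter fun T : Finset V => Set.InjOn p ↑T
  set Y := I.biUnion fun i => rainbowTriangles G {v ∈ S | p v = i}
  have hfiber : ∀ i, ∀ T ∈ rainbowTriangles G {v ∈ S | p v = i}, ∀ v ∈ T, v ∈ S ∧ p v = i :=
    fun i T hT v hv => mem_filter.1 ((mem_powersetCard.1 (mem_rainbowTriangles.1 hT).1).1 hv)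
  have hY : #Y = ∑ i ∈ I, #(rainbowTriangles G {v ∈ S | p v = i}) := by
    refine card_biUnion fun i _ j _ hij => disjoint_left.2 fun T hTi hTj => ?_
    obtain ⟨v, hv⟩ := card_pos.1 ((mem_rainbowTriangles.1 hTi).2.card_eq_three ▸ three_pos)
    exact hij ((hfiber i T hTi v hv).2.symm.trans (hfiber j T hTj v hv).2)
  have hXY : Disjoint X Y := by
    refine disjoint_left.2 fun T hTX hTY => ?_
    obtain ⟨hT, hinj⟩ := mem_filter.1 hTX
    obtain ⟨i, -, hTi⟩ := mem_biUnion.1 hTY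
    have hsub : T.image p ⊆ {i} := by
      intro j hj
      obtain ⟨v, hv, rfl⟩ := mem_image.1 hj
      exact mem_singleton.2 (hfiber i T hTi v hv).2
    have := card_le_card hsub
    rw [card_image_of_injOn hinj, (mem_powersetCard.1 hT).2, card_singleton] at this
    omega
  have hXY_sub : X ∪ Y ⊆ rainbowTriangles G S := by
    intro T hTXY
    rcases mem_union.1 hTXY with hTX | hTY
    · obtain ⟨hT, hinj⟩ := mem_filter.1 hTX
      exact mem_rainbowTriangles.2
        ⟨hT, isRainbow_of_injOn hG (mem_powersetCard.1 hT).2 hinj⟩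
    · obtain ⟨i, -, hTi⟩ := mem_biUnion.1 hTY
      obtain ⟨hT, hrb⟩ := mem_rainbowTriangles.1 hTi
      exact mem_rainbowTriangles.2 ⟨powersetCard_mono (filter_subset _ _) hT, hrb⟩
  rw [← hY, ← card_union_of_disjoint hXY]
  exact card_le_card hXY_sub

end Rainbow

/-- The colour classes are the three perfect matchings `{01, 23}`, `{02, 13}`, `{03, 12}` of
`K₄`, on which `a ^^^ b` takes the values `1`, `2`, `3`. -/
def k4Color (a b : ℕ) : Fin 3 := Fin.ofNat 3 ((a ^^^ b) - 1)

lemma k4Color_comm (a b : ℕ) : k4Color a b = k4Color b a := by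
  rw [k4Color, k4Color, Nat.xor_comm]

lemma k4Color_rainbow {a b c : ℕ} (ha : a < 4) (hb : b < 4) (hc : c < 4)
    (hab : a ≠ b) (hac : a ≠ c) (hbc : b ≠ c) :
    k4Color a b ≠ k4Color a c ∧ k4Color a b ≠ k4Color b c ∧ k4Color a c ≠ k4Color b c := by
  interval_cases a <;> interval_cases b <;> interval_cases c <;> first | omega | decide

/-- The colour of `uv` is the `K₄`-colour of the lowest base-4 digits in which `u` and `v`
differ. -/
def blowupColor (u v : ℕ) : Fin 3 :=
  if u = v then 0
  else if u % 4 = v % 4 then blowupColor (u / 4) (v / 4)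
  else k4Color (u % 4) (v % 4)
termination_by u + v

lemma blowupColor_self (u : ℕ) : blowupColor u u = 0 := by
  rw [blowupColor, if_pos rfl]

lemma blowupColor_of_mod_ne {u v : ℕ} (h : u % 4 ≠ v % 4) :
    blowupColor u v = k4Color (u % 4) (v % 4) := by
  rw [blowupColor, if_neg (by rintro rfl; exact h rfl), if_neg h]

lemma blowupColor_shift (x y : ℕ) {i : ℕ} (hi : i < 4) :
    blowupColor (4 * x + i) (4 * y + i) = blowupColor x y := by
  rcases eq_or_ne x y with rfl | hxy
  · rw [blowupColor_self, blowupColor_self]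
  · rw [blowupColor, if_neg (by omega), if_pos (by omega)]
    congr 1 <;> omega

lemma blowupColor_comm (u v : ℕ) : blowupColor u v = blowupColor v u := by
  rcases eq_or_ne u v with rfl | huv
  · rfl
  by_cases h : u % 4 = v % 4
  · rw [blowupColor.eq_1 u, if_neg huv, if_pos h, blowupColor.eq_1 v, if_neg huv.symm,
      if_pos h.symm]
    exact blowupColor_comm (u / 4) (v / 4)
  · rw [blowupColor_of_mod_ne h, blowupColor_of_mod_ne (Ne.symm h), k4Color_comm]
termination_by u + v
decreasing_by omega

noncomputable def rainbowBound (n : ℕ) : ℝ := n * (n - 1) * (n - 2) / 15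

lemma sum_powersetCard_three_range_four (f : ℕ → ℝ) :
    ∑ A ∈ (range 4).powersetCard 3, ∏ i ∈ A, f i =
      f 0 * f 1 * f 2 + f 0 * f 1 * f 3 + f 0 * f 2 * f 3 + f 1 * f 2 * f 3 := by
  rw [show (range 4).powersetCard 3 = {{0, 1, 2}, {0, 1, 3}, {0, 2, 3}, {1, 2, 3}} by decide]
  simp +decide [sum_insert, prod_insert]
  ring

lemma rainbowBound_le_blowup (n : ℕ) :
    rainbowBound n ≤ ∑ A ∈ (range 4).powersetCard 3, ∏ i ∈ A, (((n + 3 - i) / 4 : ℕ) : ℝ) +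
      ∑ i ∈ range 4, rainbowBound ((n + 3 - i) / 4) := by
  rw [sum_powersetCard_three_range_four]
  simp only [sum_range_succ, sum_range_zero, rainbowBound]
  obtain ⟨Q, r, hr, rfl⟩ : ∃ Q r, r < 4 ∧ n = 4 * Q + r :=
    ⟨n / 4, n % 4, Nat.mod_lt _ (by norm_num), (Nat.div_add_mod n 4).symm⟩
  have hq : ∀ i < 4, (4 * Q + r + 3 - i) / 4 = Q + if i < r then 1 else 0 := by
    intro i hi
    split_ifs <;> omega
  rw [hq 0 (by norm_num), hq 1 (by norm_num), hq 2 (by norm_num), hq 3 (by norm_num)]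
  have hQ : (0 : ℝ) ≤ Q := Q.cast_nonneg
  interval_cases r <;>
  · norm_num
    nlinarith

def blowupColoring : Sym2 ℕ → Fin 3 := Sym2.lift ⟨blowupColor, blowupColor_comm⟩

def residueEmbedding (i : ℕ) : ℕ ↪ ℕ := ⟨fun x => 4 * x + i, fun x y h => by simp_all⟩

@[simp]
lemma residueEmbedding_apply (i x : ℕ) : residueEmbedding i x = 4 * x + i := rfl

lemma blowupColoring_comp_residueEmbedding {i : ℕ} (hi : i < 4) :
    blowupColoring ∘ Sym2.map (residueEmbedding i) = blowupColoring := by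
  funext e
  induction e using Sym2.ind with
  | _ x y => exact blowupColor_shift x y hi

lemma blowupColoring_rainbow_of_mod_ne (u v w : ℕ) (huv : u % 4 ≠ v % 4) (huw : u % 4 ≠ w % 4)
    (hvw : v % 4 ≠ w % 4) :
    blowupColoring s(u, v) ≠ blowupColoring s(u, w) ∧
      blowupColoring s(u, v) ≠ blowupColoring s(v, w) ∧
      blowupColoring s(u, w) ≠ blowupColoring s(v, w) := by
  simp only [blowupColoring, Sym2.lift_mk, blowupColor_of_mod_ne huv, blowupColor_of_mod_ne huw,
    blowupColor_of_mod_ne hvw]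
  exact k4Color_rainbow (Nat.mod_lt _ (by norm_num)) (Nat.mod_lt _ (by norm_num))
    (Nat.mod_lt _ (by norm_num)) huv huw hvw

lemma range_filter_mod_four_eq_map (n : ℕ) {i : ℕ} (hi : i < 4) :
    {v ∈ range n | v % 4 = i} = (range ((n + 3 - i) / 4)).map (residueEmbedding i) := by
  ext v
  simp only [mem_filter, mem_range, mem_map, residueEmbedding_apply]
  constructor
  · rintro ⟨hv, rfl⟩
    exact ⟨v / 4, by omega, by omega⟩
  · rintro ⟨x, hx, rfl⟩
    omega

lemma sum_add_sum_le_card_rainbowTriangles_range (n : ℕ) :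
    ∑ A ∈ (range 4).powersetCard 3, ∏ i ∈ A, (n + 3 - i) / 4 +
        ∑ i ∈ range 4, #(rainbowTriangles blowupColoring (range ((n + 3 - i) / 4))) ≤
      #(rainbowTriangles blowupColoring (range n)) := by
  have hfiber : ∀ i ∈ range 4,
      {v ∈ range n | v % 4 = i} = (range ((n + 3 - i) / 4)).map (residueEmbedding i) :=
    fun i hi => range_filter_mod_four_eq_map n (mem_range.1 hi)
  calc _ = ∑ A ∈ (range 4).powersetCard 3, ∏ i ∈ A, #{v ∈ range n | v % 4 = i} +
        ∑ i ∈ range 4, #(rainbowTriangles blowupColoring {v ∈ range n | v % 4 = i}) := by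
        congr 1
        · refine sum_congr rfl fun A hA => prod_congr rfl fun i hi => ?_
          rw [hfiber i ((mem_powersetCard.1 hA).1 hi), card_map, card_range]
        · refine sum_congr rfl fun i hi => ?_
          rw [hfiber i hi, card_rainbowTriangles_map,
            blowupColoring_comp_residueEmbedding (mem_range.1 hi)]
    _ ≤ _ := (Nat.add_le_add_right (sum_prod_card_fiber_le_card_injOn _ _ _ _) _).trans
        (card_injOn_add_sum_le_card_rainbowTriangles _ _ blowupColoring_rainbow_of_mod_ne _ _)

lemma rainbowBound_le_card_rainbowTriangles_range (n : ℕ) :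
    rainbowBound n ≤ #(rainbowTriangles blowupColoring (range n)) := by
  induction n using Nat.strong_induction_on with
  | _ n ih =>
    rcases lt_or_ge n 2 with hn | hn
    · interval_cases n <;> simp [rainbowBound]
    calc rainbowBound n
        ≤ ∑ A ∈ (range 4).powersetCard 3, ∏ i ∈ A, (((n + 3 - i) / 4 : ℕ) : ℝ) +
            ∑ i ∈ range 4, rainbowBound ((n + 3 - i) / 4) := rainbowBound_le_blowup n
      _ ≤ ∑ A ∈ (range 4).powersetCard 3, ∏ i ∈ A, (((n + 3 - i) / 4 : ℕ) : ℝ) +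
            ∑ i ∈ range 4, (#(rainbowTriangles blowupColoring (range ((n + 3 - i) / 4))) : ℝ) :=
          by gcongr with i hi; exact ih _ (by have := mem_range.1 hi; omega)
      _ ≤ #(rainbowTriangles blowupColoring (range n)) := by
          exact_mod_cast sum_add_sum_le_card_rainbowTriangles_range n

theorem stmt7_general (n : ℕ) :
    (maxRb n : ℝ) ≥ (n : ℝ) * ((n : ℝ) - 1) * ((n : ℝ) - 2) / 15 := by
  have hcount : rbCount (blowupColoring ∘ Sym2.map (Fin.valEmbedding (n := n))) =
      #(rainbowTriangles blowupColoring (range n)) := by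
    rw [rbCount_eq_card_rainbowTriangles, ← card_rainbowTriangles_map, Fin.map_valEmbedding_univ,
      Nat.Iio_eq_range]
  calc (n : ℝ) * ((n : ℝ) - 1) * ((n : ℝ) - 2) / 15
      ≤ #(rainbowTriangles blowupColoring (range n)) :=
        rainbowBound_le_card_rainbowTriangles_range n
    _ ≤ maxRb n := by
      rw [← hcount]
      exact_mod_cast le_sup (f := rbCount) (mem_univ _)

theorem stmt7 (n : ℕ) (hn : 3 ≤ n) :
    (maxRb n : ℝ) ≥ (n : ℝ) * ((n : ℝ) - 1) * ((n : ℝ) - 2) / 15 :=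
  stmt7_general n
end

section
/- For every k ≥ 0, the iterated blow-up coloring R^k of the complete graph on 4^k vertices has exactly (4^{3k} − 4^k)/15 rainbow triangles. -/
/-- A triangle (3-element vertex set) is rainbow for a symmetric coloring given
as a two-argument function: its three edges get pairwise distinct colors. -/
def IsRainbowP {V C : Type*} [DecidableEq V] (g : V → V → C) (T : Finset V) : Prop :=
  ∃ u v w : V, T = {u, v, w} ∧ u ≠ v ∧ u ≠ w ∧ v ≠ w ∧
    g u v ≠ g u w ∧ g u v ≠ g v w ∧ g u w ≠ g v w

/-- The number of rainbow triangles. -/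
noncomputable def rbCountP {V C : Type*} [DecidableEq V] (g : V → V → C) : ℕ :=
  Nat.card {T : Finset V // IsRainbowP g T}

/-- The iterated blow-up coloring `R^k` on the vertex set `(ZMod 2 × ZMod 2)^k`:
the color of an edge `{u, v}` is `u i + v i` where `i` is the first coordinate
in which `u` and `v` differ (junk value `0` on the diagonal). -/
def Rk (k : ℕ) (u v : Fin k → ZMod 2 × ZMod 2) : ZMod 2 × ZMod 2 :=
  if h : u = v then 0
  else
    let i := (Finset.univ.filter fun i => u i ≠ v i).min' (by
      obtain ⟨i, hi⟩ := Function.ne_iff.mp h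
      exact ⟨i, Finset.mem_filter.mpr ⟨Finset.mem_univ i, hi⟩⟩)
    u i + v i

/-!
Count ordered rainbow triples `N k = 6 · rbCountP (Rk k)` instead of triangles. Splitting off the
first coordinate, `R^(k+1)` is the blow-up of the coloring `(a, b) ↦ a + b` of `K₄` by `R^k`: two
vertices with different first coordinates `a ≠ b` get the color `a + b`, two with the same first
coordinate get the `R^k`-color of their tails. A triple whose first coordinates take exactly two
values has two edges of the same color, so a rainbow triple either has three distinct first
coordinates (all `4 · 3 · 2 = 24` such patterns are rainbow, since `a + b`, `a + c`, `b + c` are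
distinct) or lies in one of the four copies of `R^k`. Hence `N (k+1) = 24 · 64^k + 4 · N k` and
`N 0 = 0`, so `5 · N k = 2 · (64^k - 4^k)`.
-/

variable {V V' A C : Type*}

def IsDistinctTriple (t : V × V × V) : Prop :=
  t.1 ≠ t.2.1 ∧ t.1 ≠ t.2.2 ∧ t.2.1 ≠ t.2.2

def IsRainbowTriple (g : V → V → C) (t : V × V × V) : Prop :=
  IsDistinctTriple t ∧
    g t.1 t.2.1 ≠ g t.1 t.2.2 ∧ g t.1 t.2.1 ≠ g t.2.1 t.2.2 ∧ g t.1 t.2.2 ≠ g t.2.1 t.2.2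

noncomputable def orderedRainbowCount (g : V → V → C) : ℕ :=
  Nat.card {t : V × V × V // IsRainbowTriple g t}

theorem orderedRainbowCount_congr {g : V → V → C} {g' : V' → V' → C} (e : V ≃ V')
    (h : ∀ u v, g' (e u) (e v) = g u v) : orderedRainbowCount g = orderedRainbowCount g' :=
  Nat.card_congr <| (e.prodCongr (e.prodCongr e)).subtypeEquiv fun _ => by
    simp only [IsRainbowTriple, IsDistinctTriple, Equiv.prodCongr_apply, Prod.map_fst,
      Prod.map_snd, h, ne_eq, e.apply_eq_iff_eq]

def distinctTripleEquivEmbedding : {t : V × V × V // IsDistinctTriple t} ≃ (Fin 3 ↪ V) where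
  toFun t := ⟨![t.1.1, t.1.2.1, t.1.2.2], by
    obtain ⟨⟨a, b, c⟩, hab, hac, hbc⟩ := t
    intro i j h
    fin_cases i <;> fin_cases j <;> simp_all [eq_comm]⟩
  invFun f := ⟨(f 0, f 1, f 2), by simp [IsDistinctTriple, f.injective.eq_iff]⟩
  left_inv _ := rfl
  right_inv f := by ext i; fin_cases i <;> rfl

theorem card_distinctTriples [Fintype V] :
    Nat.card {t : V × V × V // IsDistinctTriple t} = (Nat.card V).descFactorial 3 := by
  classical
  rw [Nat.card_congr distinctTripleEquivEmbedding, Nat.card_eq_fintype_card,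
    Fintype.card_embedding_eq, Fintype.card_fin, Nat.card_eq_fintype_card]

def subtypeDistinctTripleEquiv (p : V → Prop) :
    {s : Subtype p × Subtype p × Subtype p // IsDistinctTriple s} ≃
      {s : V × V × V // IsDistinctTriple s ∧ p s.1 ∧ p s.2.1 ∧ p s.2.2} where
  toFun s := ⟨(s.1.1, s.1.2.1, s.1.2.2), by simpa [IsDistinctTriple, Subtype.ext_iff] using s.2,
    s.1.1.2, s.1.2.1.2, s.1.2.2.2⟩
  invFun s := ⟨(⟨s.1.1, s.2.2.1⟩, ⟨s.1.2.1, s.2.2.2.1⟩, ⟨s.1.2.2, s.2.2.2.2⟩),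
    by simpa [IsDistinctTriple, Subtype.ext_iff] using s.2.1⟩
  left_inv _ := rfl
  right_inv _ := rfl

theorem isRainbowTriple_add_iff [AddCancelCommMonoid A] {t : A × A × A} :
    IsRainbowTriple (· + ·) t ↔ IsDistinctTriple t := by
  obtain ⟨a, b, c⟩ := t
  have hab_bc : a + b = b + c ↔ a = c := by rw [add_comm a b, add_right_inj]
  simp only [IsRainbowTriple, IsDistinctTriple, ne_eq, add_right_inj, add_left_inj, hab_bc]
  tauto

theorem orderedRainbowCount_add [AddCancelCommMonoid A] [Fintype A] :
    orderedRainbowCount (V := A) (· + ·) = (Nat.card A).descFactorial 3 := by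
  rw [orderedRainbowCount, ← card_distinctTriples]
  exact Nat.card_congr (Equiv.subtypeEquivRight fun _ => isRainbowTriple_add_iff)

section Triangles

variable [DecidableEq V] {g : V → V → C}

def tripleSet (t : V × V × V) : Finset V := {t.1, t.2.1, t.2.2}

theorem isRainbowP_iff {T : Finset V} :
    IsRainbowP g T ↔ ∃ t, IsRainbowTriple g t ∧ tripleSet t = T := by
  simp only [IsRainbowP, IsRainbowTriple, IsDistinctTriple, tripleSet, Prod.exists, and_assoc]
  grind

theorem IsDistinctTriple.card_tripleSet {t : V × V × V} (ht : IsDistinctTriple t) :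
    (tripleSet t).card = 3 :=
  Finset.card_eq_three.2 ⟨_, _, _, ht.1, ht.2.1, ht.2.2, rfl⟩

theorem IsRainbowTriple.of_mem_tripleSet (hg : ∀ u v, g u v = g v u) {t s : V × V × V}
    (ht : IsRainbowTriple g t) (hs : IsDistinctTriple s) (h₁ : s.1 ∈ tripleSet t)
    (h₂ : s.2.1 ∈ tripleSet t) (h₃ : s.2.2 ∈ tripleSet t) : IsRainbowTriple g s := by
  obtain ⟨u, v, w⟩ := t
  obtain ⟨a, b, c⟩ := s
  obtain ⟨⟨huv, huw, hvw⟩, h⟩ := ht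
  simp only [tripleSet, Finset.mem_insert, Finset.mem_singleton] at h₁ h₂ h₃
  refine ⟨hs, ?_⟩
  obtain ⟨hab, hac, hbc⟩ := hs
  rcases h₁ with rfl | rfl | rfl <;> rcases h₂ with rfl | rfl | rfl <;>
    rcases h₃ with rfl | rfl | rfl <;> grind

theorem card_rainbowTriple_tripleSet_eq (hg : ∀ u v, g u v = g v u) {T : Finset V}
    (hT : IsRainbowP g T) : Nat.card {s // IsRainbowTriple g s ∧ tripleSet s = T} = 6 := by
  obtain ⟨t, ht, rfl⟩ := isRainbowP_iff.1 hT
  have hiff : ∀ s, IsRainbowTriple g s ∧ tripleSet s = tripleSet t ↔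
      IsDistinctTriple s ∧ s.1 ∈ tripleSet t ∧ s.2.1 ∈ tripleSet t ∧ s.2.2 ∈ tripleSet t := by
    intro s
    constructor
    · rintro ⟨hs, hst⟩
      rw [← hst]
      exact ⟨hs.1, by simp [tripleSet]⟩
    · rintro ⟨hs, h₁, h₂, h₃⟩
      refine ⟨ht.of_mem_tripleSet hg hs h₁ h₂ h₃, Finset.eq_of_subset_of_card_le ?_ ?_⟩
      · simp only [tripleSet, Finset.insert_subset_iff, Finset.singleton_subset_iff]
        exact ⟨h₁, h₂, h₃⟩
      · rw [ht.1.card_tripleSet, hs.card_tripleSet]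
  rw [Nat.card_congr ((Equiv.subtypeEquivRight hiff).trans (subtypeDistinctTripleEquiv _).symm),
    card_distinctTriples, Nat.card_eq_fintype_card, Fintype.card_coe, ht.1.card_tripleSet]
  rfl

theorem orderedRainbowCount_eq_six_mul [Fintype V] (hg : ∀ u v, g u v = g v u) :
    orderedRainbowCount g = 6 * rbCountP g := by
  classical
  let toTriangle : {t // IsRainbowTriple g t} → {T // IsRainbowP g T} :=
    fun t => ⟨tripleSet t.1, isRainbowP_iff.2 ⟨t.1, t.2, rfl⟩⟩
  have hfiber : ∀ T, Nat.card {t // toTriangle t = T} = 6 := fun T => by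
    rw [← card_rainbowTriple_tripleSet_eq hg T.2]
    exact Nat.card_congr ((Equiv.subtypeEquivRight fun t => Subtype.ext_iff).trans
      (Equiv.subtypeSubtypeEquivSubtypeInter _ fun s => tripleSet s = T.1))
  rw [orderedRainbowCount, ← Nat.card_congr (Equiv.sigmaFiberEquiv toTriangle), Nat.card_sigma]
  simp only [hfiber, Finset.sum_const, Finset.card_univ, smul_eq_mul, rbCountP,
    Nat.card_eq_fintype_card, mul_comm]

end Triangles

section Blowup

variable [DecidableEq A] {κ : A → A → C} {g : V → V → C}

def blowup (κ : A → A → C) (g : V → V → C) (p q : A × V) : C :=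
  if p.1 = q.1 then g p.2 q.2 else κ p.1 q.1

theorem isRainbowTriple_blowup_iff (hκ : ∀ a b, κ a b = κ b a) {a b c : A} {u v w : V} :
    IsRainbowTriple (blowup κ g) ((a, u), (b, v), (c, w)) ↔
      IsRainbowTriple κ (a, b, c) ∨ (b = a ∧ c = a) ∧ IsRainbowTriple g (u, v, w) := by
  by_cases hab : a = b <;> by_cases hac : a = c <;> by_cases hbc : b = c <;>
    simp_all [IsRainbowTriple, IsDistinctTriple, blowup, eq_comm]

def tripleProdEquiv : (A × V) × (A × V) × (A × V) ≃ (A × A × A) × (V × V × V) where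
  toFun t := ((t.1.1, t.2.1.1, t.2.2.1), (t.1.2, t.2.1.2, t.2.2.2))
  invFun s := ((s.1.1, s.2.1), (s.1.2.1, s.2.2.1), (s.1.2.2, s.2.2.2))
  left_inv _ := rfl
  right_inv _ := rfl

def diagTripleEquiv : {s : A × A × A // s.2.1 = s.1 ∧ s.2.2 = s.1} ≃ A where
  toFun s := s.1.1
  invFun a := ⟨(a, a, a), rfl, rfl⟩
  left_inv s := Subtype.ext <| Prod.ext rfl <| Prod.ext s.2.1.symm s.2.2.symm
  right_inv _ := rfl

theorem orderedRainbowCount_blowup [Finite A] [Finite V] (hκ : ∀ a b, κ a b = κ b a) :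
    orderedRainbowCount (blowup κ g) =
      orderedRainbowCount κ * Nat.card V ^ 3 + Nat.card A * orderedRainbowCount g := by
  classical
  have hdisj : Disjoint (fun s : (A × A × A) × (V × V × V) => IsRainbowTriple κ s.1)
      fun s => (s.1.2.1 = s.1.1 ∧ s.1.2.2 = s.1.1) ∧ IsRainbowTriple g s.2 := by
    rw [disjoint_iff_inf_le]
    rintro s ⟨hs, ⟨hba, -⟩, -⟩
    exact hs.1.1 hba.symm
  rw [orderedRainbowCount, Nat.card_congr <| tripleProdEquiv.subtypeEquiv (q := fun s =>
      IsRainbowTriple κ s.1 ∨ (s.1.2.1 = s.1.1 ∧ s.1.2.2 = s.1.1) ∧ IsRainbowTriple g s.2) <| by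
      rintro ⟨⟨a, u⟩, ⟨b, v⟩, ⟨c, w⟩⟩; exact isRainbowTriple_blowup_iff hκ,
    Nat.card_congr (subtypeOrEquiv _ _ hdisj), Nat.card_sum,
    Nat.card_congr Equiv.prodSubtypeFstEquivSubtypeProd,
    Nat.card_congr <| Equiv.subtypeProdEquivProd
      (p := fun s : A × A × A => s.2.1 = s.1 ∧ s.2.2 = s.1)]
  simp only [Nat.card_prod, Nat.card_congr diagTripleEquiv, orderedRainbowCount]
  ring

end Blowup

theorem exists_forall_lt_eq_of_ne {ι X : Type*} [LinearOrder ι] [WellFoundedLT ι] {u v : ι → X}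
    (h : u ≠ v) : ∃ i, u i ≠ v i ∧ ∀ j < i, u j = v j := by
  obtain ⟨i, hi, hmin⟩ := wellFounded_lt.has_min {i | u i ≠ v i} (Function.ne_iff.1 h)
  exact ⟨i, hi, fun j hj => by_contra fun hne => hmin j hne hj⟩

section Rk

variable {k : ℕ}

theorem Rk_self (u : Fin k → ZMod 2 × ZMod 2) : Rk k u u = 0 := by simp [Rk]

theorem Rk_eq_add_of_forall_lt {u v : Fin k → ZMod 2 × ZMod 2} {i : Fin k} (hi : u i ≠ v i)
    (hlt : ∀ j < i, u j = v j) : Rk k u v = u i + v i := by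
  rw [Rk, dif_neg fun h => hi (congrFun h i)]
  have hmin : (Finset.univ.filter fun j => u j ≠ v j).min' ⟨i, by simpa using hi⟩ = i :=
    le_antisymm (Finset.min'_le _ _ (by simpa using hi)) <| Finset.le_min' _ _ _ fun j hj =>
      not_lt.1 fun hji => (Finset.mem_filter.1 hj).2 (hlt j hji)
  simp only [hmin]

theorem Rk_comm (u v : Fin k → ZMod 2 × ZMod 2) : Rk k u v = Rk k v u := by
  rcases eq_or_ne u v with rfl | huv
  · rfl
  obtain ⟨i, hi, hlt⟩ := exists_forall_lt_eq_of_ne huv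
  rw [Rk_eq_add_of_forall_lt hi hlt,
    Rk_eq_add_of_forall_lt hi.symm fun j hj => (hlt j hj).symm, add_comm]

theorem Rk_cons (a b : ZMod 2 × ZMod 2) (u v : Fin k → ZMod 2 × ZMod 2) :
    Rk (k + 1) (Fin.cons a u) (Fin.cons b v) = blowup (· + ·) (Rk k) (a, u) (b, v) := by
  unfold blowup
  split_ifs with hab
  · obtain rfl : a = b := hab
    rcases eq_or_ne u v with rfl | huv
    · simp only [Rk_self]
    obtain ⟨i, hi, hlt⟩ := exists_forall_lt_eq_of_ne huv
    rw [Rk_eq_add_of_forall_lt hi hlt, Rk_eq_add_of_forall_lt (i := i.succ) (by simpa using hi)]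
    · simp
    · refine Fin.cases (fun _ => rfl) fun j hj => ?_
      simpa using hlt j (Fin.succ_lt_succ_iff.1 hj)
  · rw [Rk_eq_add_of_forall_lt (i := 0) (by simpa using hab) fun j hj =>
      absurd hj (Fin.not_lt_zero j)]
    rfl

theorem orderedRainbowCount_Rk_zero : orderedRainbowCount (Rk 0) = 0 :=
  Nat.card_eq_zero.2 <| Or.inl ⟨fun t => t.2.1.1 (Subsingleton.elim _ _)⟩

theorem orderedRainbowCount_Rk_succ (k : ℕ) :
    orderedRainbowCount (Rk (k + 1)) = 24 * 4 ^ (3 * k) + 4 * orderedRainbowCount (Rk k) := by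
  rw [← orderedRainbowCount_congr (g := blowup (· + ·) (Rk k)) (Fin.consEquiv fun _ => _)
      fun p q => Rk_cons p.1 q.1 p.2 q.2,
    orderedRainbowCount_blowup add_comm, orderedRainbowCount_add]
  simp only [Nat.card_eq_fintype_card, Fintype.card_pi, Fintype.card_prod, ZMod.card,
    Finset.prod_const, Finset.card_univ, Fintype.card_fin]
  ring

theorem orderedRainbowCount_Rk (k : ℕ) :
    5 * orderedRainbowCount (Rk k) + 2 * 4 ^ k = 2 * 4 ^ (3 * k) := by
  induction k with
  | zero => simp [orderedRainbowCount_Rk_zero]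
  | succ k ih =>
    rw [orderedRainbowCount_Rk_succ]
    have h₁ : (4 : ℕ) ^ (3 * (k + 1)) = 64 * 4 ^ (3 * k) := by ring
    have h₂ : (4 : ℕ) ^ (k + 1) = 4 * 4 ^ k := by ring
    omega

end Rk

theorem stmt16 (k : ℕ) :
    rbCountP (Rk k) = (4 ^ (3 * k) - 4 ^ k) / 15 := by
  have h₆ := orderedRainbowCount_eq_six_mul (Rk_comm (k := k))
  have h₅ := orderedRainbowCount_Rk k
  omega
end
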